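/- arXiv:2311.04744 — 2 statements merged into one kernel-verified Lean document; each statement's English description precedes it below -/
import Mathlib

section
/- If the bilinear form of a quadratic space (V, Q) is nondegenerate, then the Clifford algebra inner product ⟨x, y⟩ := scalar part of x·reverse(y) is a nondegenerate bilinear form on the (finite-dimensional) Clifford algebra. -/
/-- The grade-0 (scalar) component of a Clifford algebra element, defined via the
canonical linear isomorphism with the exterior algebra. -/
noncomputable def scalarPart {V : Type*} [AddCommGroup V] [Module ℝ V]
    (Q : QuadraticForm ℝ V) (x : CliffordAlgebra Q) : ℝ :=
  letI : Invertible (2 : ℝ) := invertibleOfNonzero two_ne_zero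
  ExteriorAlgebra.algebraMapInv (CliffordAlgebra.equivExterior Q x)

namespace Stmt9Aux
open CliffordAlgebra

variable {V : Type*} [AddCommGroup V] [Module ℝ V] (Q : QuadraticForm ℝ V)

noncomputable def sp : CliffordAlgebra Q →ₗ[ℝ] ℝ :=
  ExteriorAlgebra.algebraMapInv.toLinearMap ∘ₗ (equivExterior Q).toLinearMap

lemma scalarPart_eq_sp (x : CliffordAlgebra Q) : scalarPart Q x = sp Q x := rfl

lemma sp_algebraMap (r : ℝ) : sp Q (algebraMap ℝ _ r) = r := by
  simp only [sp, LinearMap.comp_apply, LinearEquiv.coe_coe, AlgHom.toLinearMap_apply,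
    equivExterior, changeFormEquiv_apply, changeForm_algebraMap, AlgHom.commutes]
  rfl

lemma sp_ι_mul (m : V) (x : CliffordAlgebra Q) :
    sp Q (ι Q m * x) =
      sp Q (contractLeft (QuadraticMap.associated (R := ℝ) Q m) x) := by
  have hB : ((QuadraticMap.associated (R := ℝ) (-Q)) m) =
      -((QuadraticMap.associated (R := ℝ) Q) m) := by
    rw [map_neg]; rfl
  simp only [sp, LinearMap.comp_apply, LinearEquiv.coe_coe, AlgHom.toLinearMap_apply,
    equivExterior, changeFormEquiv_apply]
  have h0 : ExteriorAlgebra.algebraMapInv (ExteriorAlgebra.ι ℝ m) = (0 : ℝ) := by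
    simp [ExteriorAlgebra.algebraMapInv]
  rw [changeForm_ι_mul, map_sub, map_mul, ← changeForm_contractLeft, hB]
  simp only [map_neg, LinearMap.neg_apply, h0, zero_mul, zero_sub, neg_neg]


section Lists

variable {n : ℕ} (v : Fin n → V)

/-- Product of the images of a list of indices. -/
noncomputable def P (l : List (Fin n)) : CliffordAlgebra Q :=
  (l.map fun i => ι Q (v i)).prod

@[simp] lemma P_nil : P Q v [] = 1 := rfl

@[simp] lemma P_cons (i : Fin n) (l : List (Fin n)) :
    P Q v (i :: l) = ι Q (v i) * P Q v l := by
  simp [P]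

lemma P_append (l₁ l₂ : List (Fin n)) :
    P Q v (l₁ ++ l₂) = P Q v l₁ * P Q v l₂ := by
  simp [P]

lemma P_singleton (i : Fin n) : P Q v [i] = ι Q (v i) := by simp

lemma reverse_P (l : List (Fin n)) :
    reverse (P Q v l) = P Q v l.reverse := by
  induction l with
  | nil => simp
  | cons i l ih =>
      rw [P_cons, reverse.map_mul, ih, reverse_ι, List.reverse_cons, P_append, P_singleton]

variable {Q} {v} (horth : ∀ i j : Fin n, i ≠ j → QuadraticMap.polar Q (v i) (v j) = 0)

include horth

lemma hd0 {i j : Fin n} (hij : i ≠ j) :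
    QuadraticMap.associated (R := ℝ) Q (v i) (v j) = 0 := by
  rw [QuadraticMap.associated_apply]
  have := horth i j hij
  rw [QuadraticMap.polar] at this
  rw [this, smul_zero]

omit horth in
lemma hdself (i : Fin n) : QuadraticMap.associated (R := ℝ) Q (v i) (v i) = Q (v i) :=
  QuadraticMap.associated_eq_self_apply ℝ Q (v i)

lemma hA {i j : Fin n} (hij : i ≠ j) :
    ι Q (v i) * ι Q (v j) = -(ι Q (v j) * ι Q (v i)) := by
  have h := ι_mul_ι_add_swap (Q := Q) (v i) (v j)
  rw [horth i j hij, map_zero] at h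
  exact eq_neg_of_add_eq_zero_left h

lemma contract_P_zero (i : Fin n) (l : List (Fin n)) (hil : i ∉ l) :
    contractLeft (QuadraticMap.associated (R := ℝ) Q (v i)) (P Q v l) = 0 := by
  induction l with
  | nil => simp [contractLeft_one]
  | cons j l ih =>
      have hij : i ≠ j := fun h => hil (h ▸ List.mem_cons_self)
      rw [P_cons, contractLeft_ι_mul, ih (fun h => hil (List.mem_cons_of_mem _ h)),
        hd0 horth hij, zero_smul, mul_zero, sub_zero]

lemma contract_P_mem (i : Fin n) (l₁ l₂ : List (Fin n)) (h₁ : i ∉ l₁) (h₂ : i ∉ l₂) :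
    contractLeft (QuadraticMap.associated (R := ℝ) Q (v i)) (P Q v (l₁ ++ i :: l₂)) =
      ((-1 : ℝ) ^ l₁.length * Q (v i)) • P Q v (l₁ ++ l₂) := by
  induction l₁ with
  | nil =>
      rw [List.nil_append, P_cons, contractLeft_ι_mul, contract_P_zero horth i l₂ h₂,
        mul_zero, sub_zero, hdself i, List.nil_append, List.length_nil, pow_zero, one_mul]
  | cons j l₁ ih =>
      have hij : i ≠ j := fun h => h₁ (h ▸ List.mem_cons_self)
      rw [List.cons_append, P_cons, contractLeft_ι_mul,
        ih (fun h => h₁ (List.mem_cons_of_mem _ h)),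
        hd0 horth hij, zero_smul, zero_sub, List.cons_append, P_cons,
        List.length_cons, mul_smul_comm, ← neg_smul]
      congr 1
      ring

omit horth in
lemma sp_P_cons (i : Fin n) (l : List (Fin n)) :
    sp Q (P Q v (i :: l)) =
      sp Q (contractLeft (QuadraticMap.associated (R := ℝ) Q (v i)) (P Q v l)) := by
  rw [P_cons]; exact sp_ι_mul Q (v i) (P Q v l)

lemma sp_P_nodup_ne_nil (l : List (Fin n)) (hl : l.Nodup) (hne : l ≠ []) :
    sp Q (P Q v l) = 0 := by
  cases l with
  | nil => exact absurd rfl hne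
  | cons i t =>
      rw [sp_P_cons, contract_P_zero horth i t (List.nodup_cons.mp hl).1, map_zero]

omit horth in
lemma P_mul_reverse (l : List (Fin n)) (hl : l.Nodup) :
    P Q v l * P Q v l.reverse = algebraMap ℝ _ ((l.map fun i => Q (v i)).prod) := by
  induction l with
  | nil => simp
  | cons i t ih =>
      obtain ⟨hit, ht⟩ := List.nodup_cons.mp hl
      rw [List.reverse_cons, P_cons, P_append, P_singleton, mul_assoc,
        ← mul_assoc (P Q v t), ih ht, Algebra.commutes, ← mul_assoc, ι_sq_scalar,
        ← map_mul, List.map_cons, List.prod_cons]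

lemma sp_P_append_reverse (a : List (Fin n)) :
    ∀ b : List (Fin n), a.Nodup → b.Nodup → a.toFinset ≠ b.toFinset →
      sp Q (P Q v (a ++ b.reverse)) = 0 := by
  induction a with
  | nil =>
      intro b _ hb hne
      have hbne : b.reverse ≠ [] := by
        intro hcon
        exact hne (by rw [← List.reverse_reverse b, hcon]; rfl)
      rw [List.nil_append]
      exact sp_P_nodup_ne_nil horth _ (by simpa using hb) hbne
  | cons i a' iha =>
      intro b ha hb hne
      obtain ⟨hia', ha'⟩ := List.nodup_cons.mp ha
      rw [List.cons_append, sp_P_cons]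
      by_cases hib : i ∈ b
      · obtain ⟨b₁, b₂, rfl⟩ := List.append_of_mem hib
        obtain ⟨hb₁, hb₂', hdisj⟩ := List.nodup_append'.mp hb
        obtain ⟨hib₂, hb₂⟩ := List.nodup_cons.mp hb₂'
        have hib₁ : i ∉ b₁ := fun hx => hdisj hx (List.mem_cons_self)
        have hi1 : i ∉ a' ++ b₂.reverse := by
          simp [List.mem_append, List.mem_reverse, hia', hib₂]
        have hi2 : i ∉ b₁.reverse := by simp [List.mem_reverse, hib₁]
        have hlist : a' ++ (b₁ ++ i :: b₂).reverse
            = (a' ++ b₂.reverse) ++ i :: b₁.reverse := by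
          simp
        rw [hlist, contract_P_mem horth i _ _ hi1 hi2, map_smul, smul_eq_mul]
        have hnodup' : (b₁ ++ b₂).Nodup := by
          refine List.nodup_append'.mpr ⟨hb₁, hb₂, fun x hx1 hx2 => ?_⟩
          exact hdisj hx1 (List.mem_cons_of_mem _ hx2)
        have hne' : a'.toFinset ≠ (b₁ ++ b₂).toFinset := by
          intro heq
          apply hne
          have h1 : ∀ k, k ∈ a'.toFinset ↔ k ∈ (b₁ ++ b₂).toFinset := fun k => by rw [heq]
          ext k
          simp only [List.mem_toFinset, List.mem_cons, List.mem_append] at h1 ⊢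
          specialize h1 k
          tauto
        have hlist2 : (a' ++ b₂.reverse) ++ b₁.reverse = a' ++ (b₁ ++ b₂).reverse := by
          simp
        rw [hlist2, iha (b₁ ++ b₂) ha' hnodup' hne', mul_zero]
      · have hi : i ∉ a' ++ b.reverse := by
          simp [List.mem_append, List.mem_reverse, hia', hib]
        rw [contract_P_zero horth i _ hi, map_zero]

lemma span_step (i : Fin n) (l : List (Fin n)) (hl : List.Pairwise (· < ·) l) :
    ∃ (c : ℝ) (m : List (Fin n)), List.Pairwise (· < ·) m ∧
      (∀ k ∈ m, k = i ∨ k ∈ l) ∧ ι Q (v i) * P Q v l = c • P Q v m := by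
  induction l with
  | nil => exact ⟨1, [i], List.pairwise_singleton _ _, by simp, by simp⟩
  | cons j t ih =>
      obtain ⟨hjt, ht⟩ := List.pairwise_cons.mp hl
      rcases lt_trichotomy i j with hij | rfl | hij
      · refine ⟨1, i :: j :: t, ?_, ?_, by simp only [one_smul, P_cons]⟩
        · refine List.pairwise_cons.mpr ⟨fun k hk => ?_, hl⟩
          rcases List.mem_cons.mp hk with rfl | hk
          · exact hij
          · exact hij.trans (hjt k hk)
        · intro k hk
          simp only [List.mem_cons] at hk ⊢
          tauto
      · refine ⟨Q (v i), t, ht, fun k hk => Or.inr (List.mem_cons_of_mem _ hk), ?_⟩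
        rw [P_cons, ← mul_assoc, ι_sq_scalar, ← Algebra.smul_def]
      · obtain ⟨c, m, hm, hmem, heq⟩ := ih ht
        refine ⟨-c, j :: m, ?_, ?_, ?_⟩
        · refine List.pairwise_cons.mpr ⟨fun k hk => ?_, hm⟩
          rcases hmem k hk with rfl | hk'
          · exact hij
          · exact hjt k hk'
        · intro k hk
          rcases List.mem_cons.mp hk with rfl | hk'
          · exact Or.inr (List.mem_cons_self)
          · rcases hmem k hk' with rfl | h'
            · exact Or.inl rfl
            · exact Or.inr (List.mem_cons_of_mem _ h')
        · simp only [P_cons]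
          rw [← mul_assoc, hA horth hij.ne', neg_mul, mul_assoc, heq, mul_smul_comm,
            neg_smul]

end Lists

section Span

variable {n : ℕ} (b : Module.Basis (Fin n) ℝ V)
  (horth : ∀ i j : Fin n, i ≠ j → QuadraticMap.polar Q (b i) (b j) = 0)

/-- The set of products of sorted lists of basis vectors. -/
def sortedProds : Set (CliffordAlgebra Q) :=
  {z : CliffordAlgebra Q | ∃ l : List (Fin n), List.Pairwise (· < ·) l ∧ P Q (⇑b) l = z}

include horth in
lemma span_sortedProds : Submodule.span ℝ (sortedProds Q b) = ⊤ := by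
  have key : ∀ i : Fin n, ∀ y ∈ Submodule.span ℝ (sortedProds Q b),
      ι Q (b i) * y ∈ Submodule.span ℝ (sortedProds Q b) := by
    intro i y hy
    induction hy using Submodule.span_induction with
    | mem z hz =>
        obtain ⟨l, hl, rfl⟩ := hz
        obtain ⟨c, m, hm, _, heq⟩ := span_step horth i l hl
        rw [heq]
        exact Submodule.smul_mem _ _ (Submodule.subset_span ⟨m, hm, rfl⟩)
    | zero => rw [mul_zero]; exact Submodule.zero_mem _
    | add u w _ _ hu hw => rw [mul_add]; exact Submodule.add_mem _ hu hw
    | smul c u _ hu => rw [mul_smul_comm]; exact Submodule.smul_mem _ _ hu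
  rw [Submodule.eq_top_iff']
  intro x
  induction x using CliffordAlgebra.left_induction with
  | algebraMap r =>
      rw [Algebra.algebraMap_eq_smul_one]
      exact Submodule.smul_mem _ _ (Submodule.subset_span ⟨[], List.Pairwise.nil, rfl⟩)
  | add x y hx hy => exact Submodule.add_mem _ hx hy
  | ι_mul x m hx =>
      have hrepr : ι Q m = ∑ i : Fin n, b.repr m i • ι Q (b i) := by
        conv_lhs => rw [← b.sum_repr m]
        rw [map_sum]
        simp [map_smul]
      rw [hrepr, Finset.sum_mul]
      refine Submodule.sum_mem _ fun i _ => ?_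
      rw [smul_mul_assoc]
      exact Submodule.smul_mem _ _ (key i x hx)

end Span



end Stmt9Aux

open CliffordAlgebra Stmt9Aux in
/-- If the polar bilinear form of `Q` is nondegenerate, the Clifford inner product
`⟨x, y⟩ = ⟨x · reverse y⟩₀` is nondegenerate on the Clifford algebra. -/
theorem stmt_9 {V : Type*} [AddCommGroup V] [Module ℝ V] [FiniteDimensional ℝ V]
    (Q : QuadraticForm ℝ V)
    (hQ : LinearMap.BilinForm.Nondegenerate (QuadraticMap.polarBilin Q))
    (x : CliffordAlgebra Q)
    (h : ∀ y : CliffordAlgebra Q, scalarPart Q (x * CliffordAlgebra.reverse y) = 0) :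
    x = 0 := by
  classical
  have hsymm : (QuadraticMap.polarBilin Q).IsSymm := by
    rw [LinearMap.isSymm_def]; intro a b
    simp only [QuadraticMap.polarBilin_apply_apply, RingHom.id_apply]
    exact QuadraticMap.polar_comm _ a b
  obtain ⟨v, hv⟩ := LinearMap.BilinForm.exists_orthogonal_basis hsymm
  have horth : ∀ i j : Fin (Module.finrank ℝ V), i ≠ j →
      QuadraticMap.polar Q (v i) (v j) = 0 := by
    intro i j hij
    exact (LinearMap.isOrthoᵢ_def.mp hv) i j hij
  have hQv : ∀ i, Q (v i) ≠ 0 := by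
    intro i h0
    have hzero : QuadraticMap.polarBilin Q (v i) = 0 := by
      apply v.ext
      intro j
      rcases eq_or_ne i j with rfl | hij
      · simp only [QuadraticMap.polarBilin_apply_apply, LinearMap.zero_apply]
        rw [QuadraticMap.polar_self, h0, smul_zero]
      · simp only [QuadraticMap.polarBilin_apply_apply, LinearMap.zero_apply]
        exact horth i j hij
    have := hQ.1 (v i) (fun y => by rw [hzero]; rfl)
    exact v.ne_zero i this
  have hx : x ∈ Submodule.span ℝ (sortedProds Q v) := by
    rw [span_sortedProds Q v horth]; trivial
  obtain ⟨c, hsupp, hsum⟩ := Submodule.mem_span_set.mp hx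
  have hc : ∀ z₀, c z₀ = 0 := by
    intro z₀
    by_cases hz₀ : z₀ ∈ c.support
    swap
    · exact Finsupp.notMem_support_iff.mp hz₀
    obtain ⟨l₀, hl₀, hPl₀⟩ := hsupp hz₀
    have hexp : sp Q (x * reverse z₀)
        = c.sum fun z r => r * sp Q (z * reverse z₀) := by
      rw [← hsum, Finsupp.sum_mul, map_finsuppSum]
      exact Finsupp.sum_congr fun z _ => by rw [smul_mul_assoc, map_smul, smul_eq_mul]
    have h0 : (c.sum fun z r => r * sp Q (z * reverse z₀)) = 0 := by
      rw [← hexp, ← scalarPart_eq_sp]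
      exact h z₀
    have hrest : ∀ z, z ≠ z₀ → (c z) * sp Q (z * reverse z₀) = 0 := by
      intro z hzne
      by_cases hz : z ∈ c.support
      · obtain ⟨l, hl, hPl⟩ := hsupp hz
        have hfne : l.toFinset ≠ l₀.toFinset := by
          intro heq
          apply hzne
          rw [← hPl, ← hPl₀]
          congr 1
          exact List.Perm.eq_of_pairwise (fun a _ _ _ h1 h2 => absurd (h1.trans h2) (lt_irrefl a))
            hl hl₀ (List.perm_of_nodup_nodup_toFinset_eq hl.nodup hl₀.nodup heq)
        rw [← hPl, ← hPl₀, reverse_P, ← P_append, sp_P_append_reverse horth l l₀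
          hl.nodup hl₀.nodup hfne, mul_zero]
      · rw [Finsupp.notMem_support_iff.mp hz, zero_mul]
    have hsingle : (c.sum fun z r => r * sp Q (z * reverse z₀))
        = c z₀ * sp Q (z₀ * reverse z₀) :=
      Finsupp.sum_eq_single z₀ (fun z _ hzne => hrest z hzne) (fun _ => zero_mul _)
    have hgram : sp Q (z₀ * reverse z₀) = (l₀.map fun i => Q (v i)).prod := by
      rw [← hPl₀, reverse_P, P_mul_reverse _ hl₀.nodup, sp_algebraMap]
    have hgne : (l₀.map fun i => Q (v i)).prod ≠ 0 := by
      apply List.prod_ne_zero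
      intro ha
      obtain ⟨i, _, hcon⟩ := List.mem_map.mp ha
      exact hQv i hcon
    rw [hsingle, hgram] at h0
    exact (mul_eq_zero.mp h0).resolve_right hgne
  have hczero : c = 0 := Finsupp.ext hc
  rw [← hsum, hczero, Finsupp.sum_zero_index]
end

section
/- In the PGA, for any Spin-equivariant linear maps φ, ψ on G(3,0,1) and the point embedding ω(x) = x₁e₀₃₂ + x₂e₀₁₃ + x₃e₀₂₁ + e₁₂₃, the function (x, y) ↦ ⟨φ(ω(x)), ψ(ω(y))⟩ is constant on R^3 × R^3, given that (a) the PGA inner product vanishes on all components involving e₀ and (b) translations act trivially on the e₀-free subalgebra and equivariant maps commute with translations. -/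
namespace PGA

variable (Q : QuadraticForm ℝ (Fin 4 → ℝ))

/-- The generators `e₀, e₁, e₂, e₃` of the PGA. -/
noncomputable def e (i : Fin 4) : CliffordAlgebra Q :=
  CliffordAlgebra.ι Q (Pi.single i 1)

/-- The PGA translation element `u_t = 1 + (1/2) e₀ (t₁e₁ + t₂e₂ + t₃e₃)`. -/
noncomputable def u (t : Fin 3 → ℝ) : CliffordAlgebra Q :=
  1 + (1 / 2 : ℝ) • (e Q 0 * (t 0 • e Q 1 + t 1 • e Q 2 + t 2 • e Q 3))

/-- The inverse translation element `1 - (1/2) e₀ (t₁e₁ + t₂e₂ + t₃e₃)`. -/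
noncomputable def u' (t : Fin 3 → ℝ) : CliffordAlgebra Q :=
  1 - (1 / 2 : ℝ) • (e Q 0 * (t 0 • e Q 1 + t 1 • e Q 2 + t 2 • e Q 3))

/-- The PGA point representation `ω(x) = x₁e₀e₃e₂ + x₂e₀e₁e₃ + x₃e₀e₂e₁ + e₁e₂e₃`. -/
noncomputable def ω (x : Fin 3 → ℝ) : CliffordAlgebra Q :=
  x 0 • (e Q 0 * e Q 3 * e Q 2) + x 1 • (e Q 0 * e Q 1 * e Q 3) +
    x 2 • (e Q 0 * e Q 2 * e Q 1) + e Q 1 * e Q 2 * e Q 3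

end PGA

open PGA

open CliffordAlgebra

variable {R : Type*} [CommRing R] {M : Type*} [AddCommGroup M] [Module R M] {Q : QuadraticForm R M}

/-- Leibniz rule for left contraction. -/
theorem contractLeft_mul' (d : Module.Dual R M) (a b : CliffordAlgebra Q) :
    contractLeft (Q := Q) d (a * b) =
      contractLeft (Q := Q) d a * b + involute a * contractLeft (Q := Q) d b := by
  induction a using CliffordAlgebra.left_induction with
  | algebraMap r => simp [contractLeft_algebraMap, involute.commutes, contractLeft_algebraMap_mul]
  | add x y hx hy =>
      rw [add_mul, map_add, map_add, map_add, hx, hy]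
      simp only [add_mul]
      abel
  | ι_mul x m hx =>
      rw [mul_assoc, contractLeft_ι_mul, hx, contractLeft_ι_mul]
      simp only [map_mul, involute_ι, mul_sub, sub_mul, mul_add, add_mul, smul_mul_assoc,
        mul_smul_comm, neg_mul, mul_neg, mul_assoc]
      abel

theorem involute_contractLeft (d : Module.Dual R M) (z : CliffordAlgebra Q) :
    involute (contractLeft (Q := Q) d z) = - contractLeft (Q := Q) d (involute z) := by
  induction z using CliffordAlgebra.left_induction with
  | algebraMap r => simp [contractLeft_algebraMap]
  | add x y hx hy => rw [map_add, map_add, map_add, map_add, hx, hy, neg_add]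
  | ι_mul x m hx =>
      rw [contractLeft_ι_mul, map_sub, map_smul, map_mul, involute_ι, hx, map_mul, involute_ι]
      simp only [neg_mul, map_neg, contractLeft_ι_mul, map_smul]
      try simp only [mul_neg, neg_mul, neg_sub, neg_neg, smul_neg]
      try abel

/-- Filtration of the Clifford algebra by number of generators. -/
noncomputable def Sk (Q : QuadraticForm R M) : ℕ → Submodule R (CliffordAlgebra Q)
  | 0 => LinearMap.range (Algebra.linearMap R (CliffordAlgebra Q))
  | (k+1) => Sk Q k ⊔ LinearMap.range (ι Q) * Sk Q k

theorem Sk_le_succ (k : ℕ) : Sk Q k ≤ Sk Q (k+1) := le_sup_left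

theorem Sk_mono {k l : ℕ} (h : k ≤ l) : Sk Q k ≤ Sk Q l := by
  induction h with
  | refl => exact le_rfl
  | step h ih => exact le_trans ih (Sk_le_succ _)

theorem exists_Sk (z : CliffordAlgebra Q) : ∃ k, z ∈ Sk Q k := by
  induction z using CliffordAlgebra.left_induction with
  | algebraMap r => exact ⟨0, ⟨r, rfl⟩⟩
  | add x y hx hy =>
      obtain ⟨k, hk⟩ := hx; obtain ⟨l, hl⟩ := hy
      exact ⟨max k l, Submodule.add_mem _ (Sk_mono (le_max_left k l) hk)
        (Sk_mono (le_max_right k l) hl)⟩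
  | ι_mul x m hx =>
      obtain ⟨k, hk⟩ := hx
      exact ⟨k+1, le_sup_right (α := Submodule R (CliffordAlgebra Q))
        (Submodule.mul_mem_mul ⟨m, rfl⟩ hk)⟩

theorem contractLeft_Sk (d : Module.Dual R M) :
    ∀ k, ∀ z ∈ Sk Q k, contractLeft (Q := Q) d z ∈ Sk Q k := by
  intro k
  induction k with
  | zero => rintro z ⟨r, rfl⟩; simp only [Algebra.linearMap_apply, contractLeft_algebraMap]
            exact Submodule.zero_mem _
  | succ k ih =>
      intro z hz
      obtain ⟨a, ha, b, hb, rfl⟩ := Submodule.mem_sup.mp hz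
      rw [map_add]
      refine Submodule.add_mem _ (Sk_le_succ k (ih a ha)) ?_
      refine Submodule.mul_induction_on hb ?_ ?_
      · rintro v ⟨m, rfl⟩ w hw
        rw [contractLeft_ι_mul]
        refine Submodule.sub_mem _ (Sk_le_succ k (Submodule.smul_mem _ _ hw)) ?_
        exact le_sup_right (α := Submodule R (CliffordAlgebra Q))
          (Submodule.mul_mem_mul ⟨m, rfl⟩ (ih w hw))
      · intro x y hx hy
        rw [map_add]; exact Submodule.add_mem _ hx hy

variable {V : Type*} [AddCommGroup V] [Module ℝ V] {Q : QuadraticForm ℝ V}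

theorem scalarPart_add (x y : CliffordAlgebra Q) :
    scalarPart Q (x + y) = scalarPart Q x + scalarPart Q y := by
  unfold scalarPart; rw [map_add, map_add]

theorem scalarPart_smul (r : ℝ) (x : CliffordAlgebra Q) :
    scalarPart Q (r • x) = r * scalarPart Q x := by
  unfold scalarPart; rw [map_smul, map_smul, smul_eq_mul]

theorem scalarPart_neg (x : CliffordAlgebra Q) : scalarPart Q (-x) = - scalarPart Q x := by
  unfold scalarPart; rw [map_neg, map_neg]

theorem scalarPart_sub (x y : CliffordAlgebra Q) :
    scalarPart Q (x - y) = scalarPart Q x - scalarPart Q y := by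
  unfold scalarPart; rw [map_sub, map_sub]

theorem scalarPart_zero : scalarPart Q 0 = 0 := by
  unfold scalarPart; rw [map_zero, map_zero]

theorem scalarPart_iota_mul (m : V) (z : CliffordAlgebra Q) :
    letI : Invertible (2 : ℝ) := invertibleOfNonzero two_ne_zero
    scalarPart Q (ι Q m * z) =
      - scalarPart Q (contractLeft (Q := Q) (QuadraticMap.associated (-Q) m) z) := by
  letI : Invertible (2 : ℝ) := invertibleOfNonzero two_ne_zero
  unfold scalarPart
  simp only [equivExterior, changeFormEquiv_apply]
  rw [changeForm_ι_mul, map_sub, map_mul, changeForm_contractLeft]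
  have : (ExteriorAlgebra.algebraMapInv : ExteriorAlgebra ℝ V →ₐ[ℝ] ℝ)
      (ExteriorAlgebra.ι ℝ m) = 0 := by
    simp [ExteriorAlgebra.algebraMapInv]
  rw [show (ι (0 : QuadraticForm ℝ V) m : ExteriorAlgebra ℝ V) = ExteriorAlgebra.ι ℝ m from rfl,
    this, zero_mul, zero_sub]

theorem scalarPart_iota (m : V) : scalarPart Q (ι Q m) = 0 := by
  have := scalarPart_iota_mul (Q := Q) m 1
  simpa [contractLeft_one, scalarPart_zero] using this

theorem key_lemma : ∀ (k : ℕ), ∀ z ∈ Sk Q k,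
    letI : Invertible (2 : ℝ) := invertibleOfNonzero two_ne_zero
    (∀ n, scalarPart Q (z * ι Q n) =
        - scalarPart Q (contractLeft (Q := Q) (QuadraticMap.associated (-Q) n) z)) ∧
      scalarPart Q (involute z) = scalarPart Q z := by
  letI : Invertible (2 : ℝ) := invertibleOfNonzero two_ne_zero
  have hsym : ∀ m n : V, QuadraticMap.associated (-Q) m n = QuadraticMap.associated (-Q) n m := by
    intro m n
    simpa using (QuadraticMap.associated_isSymm ℝ (-Q)) m n
  intro k
  induction k using Nat.strong_induction_on with
  | _ k ih =>
    match k with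
    | 0 =>
      rintro z ⟨r, rfl⟩
      refine ⟨fun n => ?_, ?_⟩
      · rw [Algebra.linearMap_apply, ← Algebra.smul_def, contractLeft_algebraMap,
          scalarPart_smul, scalarPart_iota, scalarPart_zero, mul_zero, neg_zero]
      · rw [Algebra.linearMap_apply, involute.commutes]
    | (k+1) =>
      intro z hz
      obtain ⟨a, ha, b, hb, rfl⟩ := Submodule.mem_sup.mp hz
      have Pa := ih k (Nat.lt_succ_self k) a ha
      have Pb : (∀ n, scalarPart Q (b * ι Q n) =
          - scalarPart Q (contractLeft (Q := Q) (QuadraticMap.associated (-Q) n) b)) ∧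
          scalarPart Q (involute b) = scalarPart Q b := by
        refine Submodule.mul_induction_on hb ?_ ?_
        · rintro v ⟨m, rfl⟩ w hw
          have Pw := ih k (Nat.lt_succ_self k) w hw
          have Pcw := fun (d : Module.Dual ℝ V) =>
            ih k (Nat.lt_succ_self k) _ (contractLeft_Sk d k w hw)
          constructor
          · intro n
            -- LHS
            rw [mul_assoc, scalarPart_iota_mul, contractLeft_mul', contractLeft_ι,
              ← Algebra.commutes, ← Algebra.smul_def, scalarPart_add, scalarPart_smul,
              (Pcw _).1 n, Pw.2, contractLeft_ι_mul, scalarPart_sub, scalarPart_smul,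
              scalarPart_iota_mul, contractLeft_comm, hsym m n]
            simp only [scalarPart_neg]
            ring
          · rw [map_mul, involute_ι, neg_mul, scalarPart_neg, scalarPart_iota_mul]
            have h1 : contractLeft (Q := Q) (QuadraticMap.associated (-Q) m) (involute w)
                = - involute (contractLeft (Q := Q) (QuadraticMap.associated (-Q) m) w) := by
              rw [involute_contractLeft, neg_neg]
            rw [h1, scalarPart_neg, neg_neg, (Pcw _).2, scalarPart_iota_mul]
        · intro x y hx hy
          refine ⟨fun n => ?_, ?_⟩
          · rw [add_mul, scalarPart_add, map_add, scalarPart_add, hx.1 n, hy.1 n, neg_add]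
          · rw [map_add, scalarPart_add, scalarPart_add, hx.2, hy.2]
      refine ⟨fun n => ?_, ?_⟩
      · rw [add_mul, scalarPart_add, map_add, scalarPart_add, Pa.1 n, Pb.1 n, neg_add]
      · rw [map_add, scalarPart_add, scalarPart_add, Pa.2, Pb.2]

theorem scalarPart_iota_comm (m : V) (z : CliffordAlgebra Q) :
    scalarPart Q (ι Q m * z) = scalarPart Q (z * ι Q m) := by
  obtain ⟨k, hk⟩ := exists_Sk z
  rw [scalarPart_iota_mul, (key_lemma k z hk).1 m]

theorem scalarPart_mul_comm (a b : CliffordAlgebra Q) :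
    scalarPart Q (a * b) = scalarPart Q (b * a) := by
  induction a using CliffordAlgebra.left_induction generalizing b with
  | algebraMap r => rw [Algebra.commutes]
  | add x y hx hy => rw [add_mul, mul_add, scalarPart_add, scalarPart_add, hx, hy]
  | ι_mul x m hx =>
      rw [mul_assoc, scalarPart_iota_comm, mul_assoc, hx, ← mul_assoc]


section PGAFacts

variable {Q : QuadraticForm ℝ (Fin 4 → ℝ)}
variable (hQ : ∀ x, Q x = (x 1) ^ 2 + (x 2) ^ 2 + (x 3) ^ 2)
include hQ

theorem hassoc0 :
    letI : Invertible (2 : ℝ) := invertibleOfNonzero two_ne_zero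
    QuadraticMap.associated (-Q) (Pi.single (0 : Fin 4) (1 : ℝ)) = 0 := by
  letI : Invertible (2 : ℝ) := invertibleOfNonzero two_ne_zero
  refine LinearMap.ext fun y => ?_
  rw [LinearMap.zero_apply, QuadraticMap.associated_apply]
  have h1 : ∀ i : Fin 4, i ≠ 0 → ((Pi.single (0 : Fin 4) (1 : ℝ) + y : Fin 4 → ℝ)) i = y i := by
    intro i hi
    simp [Pi.single_eq_of_ne hi]
  have : (-Q) ((Pi.single (0 : Fin 4) (1 : ℝ) + y : Fin 4 → ℝ)) -
      (-Q) (Pi.single (0 : Fin 4) (1 : ℝ)) - (-Q) y = 0 := by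
    simp only [QuadraticMap.neg_apply, hQ, h1 1 (by decide), h1 2 (by decide), h1 3 (by decide),
      Pi.single_eq_of_ne (show (1 : Fin 4) ≠ 0 by decide),
      Pi.single_eq_of_ne (show (2 : Fin 4) ≠ 0 by decide),
      Pi.single_eq_of_ne (show (3 : Fin 4) ≠ 0 by decide)]
    ring
  rw [this, smul_zero]

theorem sp_e0_mul (z : CliffordAlgebra Q) : scalarPart Q (e Q 0 * z) = 0 := by
  rw [show e Q 0 = CliffordAlgebra.ι Q (Pi.single 0 1) from rfl, scalarPart_iota_mul,
    hassoc0 hQ, map_zero, LinearMap.zero_apply, scalarPart_zero, neg_zero]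

theorem sp_mid (C D : CliffordAlgebra Q) : scalarPart Q (C * (e Q 0 * D)) = 0 := by
  rw [scalarPart_mul_comm, mul_assoc]
  exact sp_e0_mul hQ _

theorem sp_peel_left (c : ℝ) (W Z : CliffordAlgebra Q) :
    scalarPart Q ((1 + c • (e Q 0 * W)) * Z) = scalarPart Q Z := by
  rw [add_mul, one_mul, smul_mul_assoc, mul_assoc, scalarPart_add, scalarPart_smul,
    sp_e0_mul hQ, mul_zero, add_zero]

theorem sp_peel_mid (c : ℝ) (C W D : CliffordAlgebra Q) :
    scalarPart Q (C * ((1 + c • (e Q 0 * W)) * D)) = scalarPart Q (C * D) := by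
  rw [add_mul, one_mul, smul_mul_assoc, mul_assoc, mul_add, mul_smul_comm, scalarPart_add,
    scalarPart_smul, sp_mid hQ, mul_zero, add_zero]

theorem sp_peel_right (c : ℝ) (C W : CliffordAlgebra Q) :
    scalarPart Q (C * (1 + c • (e Q 0 * W))) = scalarPart Q C := by
  rw [mul_add, mul_one, mul_smul_comm, scalarPart_add, scalarPart_smul, sp_mid hQ,
    mul_zero, add_zero]

omit hQ in
theorem u_eq (t : Fin 3 → ℝ) :
    u Q t = 1 + (1 / 2 : ℝ) • (e Q 0 * (t 0 • e Q 1 + t 1 • e Q 2 + t 2 • e Q 3)) := rfl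

omit hQ in
theorem u'_eq (t : Fin 3 → ℝ) :
    u' Q t = 1 + (-(1 / 2) : ℝ) • (e Q 0 * (t 0 • e Q 1 + t 1 • e Q 2 + t 2 • e Q 3)) := by
  rw [u', sub_eq_add_neg, ← neg_smul]

theorem horth0 : ∀ i : Fin 4, i ≠ 0 → e Q i * e Q 0 = -(e Q 0 * e Q i) := by
  intro i hi
  refine CliffordAlgebra.ι_mul_ι_comm_of_isOrtho (QuadraticMap.isOrtho_def.mpr ?_)
  have h1 : ∀ j : Fin 4, j ≠ 0 → ((Pi.single i (1:ℝ) + Pi.single (0 : Fin 4) (1:ℝ) : Fin 4 → ℝ)) j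
      = (Pi.single i (1:ℝ) : Fin 4 → ℝ) j := by
    intro j hj; simp [Pi.single_eq_of_ne hj]
  rw [hQ, hQ, hQ, h1 1 (by decide), h1 2 (by decide), h1 3 (by decide)]
  simp [Pi.single_eq_of_ne (show (1 : Fin 4) ≠ 0 by decide),
    Pi.single_eq_of_ne (show (2 : Fin 4) ≠ 0 by decide),
    Pi.single_eq_of_ne (show (3 : Fin 4) ≠ 0 by decide)]

theorem reverse_u (t : Fin 3 → ℝ) : CliffordAlgebra.reverse (u Q t) = u' Q t := by
  rw [u_eq, u'_eq]
  rw [map_add, CliffordAlgebra.reverse.map_one, map_smul, CliffordAlgebra.reverse.map_mul]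
  have hrev : ∀ i : Fin 4, CliffordAlgebra.reverse (e Q i) = e Q i := fun i =>
    CliffordAlgebra.reverse_ι _
  rw [map_add, map_add, map_smul, map_smul, map_smul, hrev, hrev, hrev, hrev 0]
  rw [add_mul, add_mul, smul_mul_assoc, smul_mul_assoc, smul_mul_assoc,
    horth0 hQ 1 (by decide), horth0 hQ 2 (by decide), horth0 hQ 3 (by decide)]
  simp only [smul_neg, ← neg_add, mul_add, mul_smul_comm, smul_smul]
  rw [neg_smul]

theorem reverse_u' (t : Fin 3 → ℝ) : CliffordAlgebra.reverse (u' Q t) = u Q t := by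
  have h := reverse_u hQ t
  have : CliffordAlgebra.reverse (CliffordAlgebra.reverse (u Q t)) = u Q t :=
    CliffordAlgebra.reverse_reverse _
  rw [h] at this
  exact this

theorem horth : ∀ i j : Fin 4, i ≠ j → e Q i * e Q j = -(e Q j * e Q i) := by
  intro i j hij
  refine CliffordAlgebra.ι_mul_ι_comm_of_isOrtho (QuadraticMap.isOrtho_def.mpr ?_)
  rw [hQ, hQ, hQ]
  simp only [Pi.add_apply, Pi.single_apply]
  fin_cases i <;> fin_cases j <;> simp_all <;> ring

theorem hsq : ∀ i : Fin 4, i ≠ 0 → e Q i * e Q i = 1 := by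
  intro i hi
  rw [e, CliffordAlgebra.ι_sq_scalar, hQ]
  simp only [Pi.single_apply]
  fin_cases i <;> simp_all

theorem h00 : e Q 0 * e Q 0 = 0 := by
  rw [e, CliffordAlgebra.ι_sq_scalar, hQ]
  simp [Pi.single_eq_of_ne (show (1 : Fin 4) ≠ 0 by decide),
    Pi.single_eq_of_ne (show (2 : Fin 4) ≠ 0 by decide),
    Pi.single_eq_of_ne (show (3 : Fin 4) ≠ 0 by decide)]

theorem omega_eq (t : Fin 3 → ℝ) :
    u Q t * (e Q 1 * e Q 2 * e Q 3) * u' Q t = ω Q (-t) := by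
  have hsw' : ∀ i j : Fin 4, i ≠ j → ∀ z, e Q i * (e Q j * z) = -(e Q j * (e Q i * z)) := by
    intro i j hij z
    rw [← mul_assoc, horth hQ i j hij, neg_mul, mul_assoc]
  have hsq' : ∀ i : Fin 4, i ≠ 0 → ∀ z : CliffordAlgebra Q, e Q i * (e Q i * z) = z := by
    intro i hi z
    rw [← mul_assoc, hsq hQ i hi, one_mul]
  have h00' : ∀ z : CliffordAlgebra Q, e Q 0 * (e Q 0 * z) = 0 := by
    intro z
    rw [← mul_assoc, h00 hQ, zero_mul]
  simp only [u_eq, u'_eq, ω]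
  simp only [mul_add, add_mul, mul_one, one_mul, smul_mul_assoc, mul_smul_comm, smul_add,
    smul_smul, mul_assoc, mul_neg, neg_mul, smul_neg, neg_neg, neg_add, Pi.neg_apply]
  simp only [hsw' 1 0 (by decide), hsw' 2 0 (by decide), hsw' 3 0 (by decide),
    hsw' 2 1 (by decide), hsw' 3 1 (by decide), hsw' 3 2 (by decide),
    horth hQ 1 0 (by decide), horth hQ 2 0 (by decide), horth hQ 3 0 (by decide),
    horth hQ 2 1 (by decide), horth hQ 3 1 (by decide), horth hQ 3 2 (by decide),
    hsq' 1 (by decide), hsq' 2 (by decide), hsq' 3 (by decide),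
    hsq hQ 1 (by decide), hsq hQ 2 (by decide), hsq hQ 3 (by decide),
    h00', h00 hQ, mul_neg, neg_neg, smul_neg, mul_zero, zero_mul, smul_zero, mul_one, one_mul,
    add_zero, zero_add, neg_zero, mul_smul_comm, mul_assoc]
  module

end PGAFacts

section Assembly

variable {Q : QuadraticForm ℝ (Fin 4 → ℝ)}
variable (hQ : ∀ x, Q x = (x 1) ^ 2 + (x 2) ^ 2 + (x 3) ^ 2)
include hQ

theorem pu_l (t : Fin 3 → ℝ) (Z : CliffordAlgebra Q) :
    scalarPart Q (u Q t * Z) = scalarPart Q Z := by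
  rw [u_eq]; exact sp_peel_left hQ _ _ _

theorem pu'_m (t : Fin 3 → ℝ) (C D : CliffordAlgebra Q) :
    scalarPart Q (C * (u' Q t * D)) = scalarPart Q (C * D) := by
  rw [u'_eq]; exact sp_peel_mid hQ _ _ _ _

theorem pu_m (t : Fin 3 → ℝ) (C D : CliffordAlgebra Q) :
    scalarPart Q (C * (u Q t * D)) = scalarPart Q (C * D) := by
  rw [u_eq]; exact sp_peel_mid hQ _ _ _ _

theorem pu'_r (t : Fin 3 → ℝ) (C : CliffordAlgebra Q) :
    scalarPart Q (C * u' Q t) = scalarPart Q C := by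
  rw [u'_eq]; exact sp_peel_right hQ _ _ _

end Assembly


/-- For linear maps `φ, ψ` on the PGA that commute with all translations, the
inner product `⟨φ(ω(x)), ψ(ω(y))⟩` is constant in both `x` and `y`. -/
theorem stmt_15 (Q : QuadraticForm ℝ (Fin 4 → ℝ))
    (hQ : ∀ x, Q x = (x 1) ^ 2 + (x 2) ^ 2 + (x 3) ^ 2)
    (φ ψ : CliffordAlgebra Q →ₗ[ℝ] CliffordAlgebra Q)
    (hφ : ∀ (t : Fin 3 → ℝ) (a : CliffordAlgebra Q),
      φ (u Q t * a * u' Q t) = u Q t * φ a * u' Q t)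
    (hψ : ∀ (t : Fin 3 → ℝ) (a : CliffordAlgebra Q),
      ψ (u Q t * a * u' Q t) = u Q t * ψ a * u' Q t) :
    ∀ x y x' y' : Fin 3 → ℝ,
      scalarPart Q (φ (ω Q x) * CliffordAlgebra.reverse (ψ (ω Q y))) =
        scalarPart Q (φ (ω Q x') * CliffordAlgebra.reverse (ψ (ω Q y'))) := by
  have key : ∀ x y : Fin 3 → ℝ,
      scalarPart Q (φ (ω Q x) * CliffordAlgebra.reverse (ψ (ω Q y))) =
        scalarPart Q (φ (e Q 1 * e Q 2 * e Q 3) *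
          CliffordAlgebra.reverse (ψ (e Q 1 * e Q 2 * e Q 3))) := by
    intro x y
    have hω : ∀ s : Fin 3 → ℝ,
        ω Q s = u Q (-s) * (e Q 1 * e Q 2 * e Q 3) * u' Q (-s) := by
      intro s; rw [omega_eq hQ (-s), neg_neg]
    rw [hω x, hω y, hφ (-x), hψ (-y), CliffordAlgebra.reverse.map_mul,
      CliffordAlgebra.reverse.map_mul, reverse_u' hQ, reverse_u hQ]
    simp only [mul_assoc]
    rw [pu_l hQ, pu'_m hQ, pu_m hQ, ← mul_assoc, pu'_r hQ]
  intro x y x' y'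
  rw [key x y, key x' y']
end
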